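/- arXiv:math/0211134 — 7 statements merged into one kernel-verified Lean document; each statement's English description precedes it below -/
import Mathlib

section
/- Let Ψ_l and Ψ_{l'} be M×M unitary matrices and let Φ_l = (1/√2)·[I; Ψ_l] and Φ_{l'} = (1/√2)·[I; Ψ_{l'}] be the corresponding 2M×M matrices with orthonormal columns. Then for each m = 1,…,M, 1 − δ_m²(Φ_l* Φ_{l'}) = (1/4)·δ_m²(Ψ_l − Ψ_{l'}), where δ_m denotes the m-th singular value. -/
/-!
Because `Φₗᴴ Φₗ' = ½ (1 + Ψₗᴴ Ψₗ')` and unitary `U`, `V` satisfy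
`(1 + UᴴV)ᴴ (1 + UᴴV) + (U - V)ᴴ (U - V) = 4`, the Gram matrix of `Φₗᴴ Φₗ'` is the affine function
`x ↦ 1 - x / 4` of the Gram matrix of `Ψₗ - Ψₗ'`. The eigenvalues of `f(A)` for Hermitian `A` are the
values of `f` at those of `A`, up to a reordering: both lists are the roots of the same
characteristic polynomial.
-/

open Matrix

/-- The squared singular values of a complex matrix `A`, defined as the
eigenvalues of the Hermitian matrix `Aᴴ * A`. -/
noncomputable def singValSq {k M : ℕ} (A : Matrix (Fin k) (Fin M) ℂ) : Fin M → ℝ :=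
  (Matrix.isHermitian_conjTranspose_mul_self A).eigenvalues

theorem Fintype.exists_equiv_apply_eq_of_map_univ_val_eq {α β : Type*} [Fintype α]
    {f g : α → β} (h : Finset.univ.val.map f = Finset.univ.val.map g) :
    ∃ e : α ≃ α, ∀ a, g (e a) = f a := by
  classical
  have hfiber (b : β) : Fintype.card {a // f a = b} = Fintype.card {a // g a = b} := by
    simpa [Multiset.count_map, Fintype.card_subtype, ← Finset.filter_val, eq_comm]
      using congrArg (Multiset.count b) h
  exact ⟨Equiv.ofFiberEquiv fun b ↦ Fintype.equivOfCardEq (hfiber b), Equiv.ofFiberEquiv_map _⟩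

namespace Matrix

variable {R m n : Type*} [Fintype n] [DecidableEq n]

theorem IsHermitian.exists_equiv_eigenvalues_of_eq_cfc {𝕜 : Type*} [RCLike 𝕜]
    {A B : Matrix n n 𝕜} (hA : A.IsHermitian) (hB : B.IsHermitian) {f : ℝ → ℝ}
    (hBA : B = cfc f A) :
    ∃ e : n ≃ n, ∀ i, f (hA.eigenvalues (e i)) = hB.eigenvalues i := by
  subst hBA
  have hroots := hB.roots_charpoly_eq_eigenvalues
  rw [hA.charpoly_cfc_eq,
    Polynomial.roots_prod _ _ (by simp [Finset.prod_ne_zero_iff, Polynomial.X_sub_C_ne_zero])]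
    at hroots
  have h : Finset.univ.val.map hB.eigenvalues = Finset.univ.val.map (f ∘ hA.eigenvalues) := by
    apply Multiset.map_injective (RCLike.ofReal_injective (K := 𝕜))
    simpa [Multiset.bind_singleton, Multiset.map_map] using hroots.symm
  exact Fintype.exists_equiv_apply_eq_of_map_univ_val_eq h

theorem conjTranspose_fromRows_one_mul_fromRows_one [Fintype m] [Semiring R] [StarRing R]
    (U V : Matrix m n R) :
    (fromRows (1 : Matrix n n R) U)ᴴ * fromRows (1 : Matrix n n R) V = 1 + Uᴴ * V := by
  rw [conjTranspose_fromRows_eq_fromCols_conjTranspose, fromCols_mul_fromRows, conjTranspose_one,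
    one_mul]

theorem conjTranspose_mul_self_one_add_add_conjTranspose_mul_self_sub [CommRing R] [StarRing R]
    {U V : Matrix n n R} (hU : Uᴴ * U = 1) (hV : Vᴴ * V = 1) :
    (1 + Uᴴ * V)ᴴ * (1 + Uᴴ * V) + (U - V)ᴴ * (U - V) = 4 := by
  have hVU : Vᴴ * U * (Uᴴ * V) = 1 := by
    rw [Matrix.mul_assoc, ← Matrix.mul_assoc U, mul_eq_one_comm.mp hU, Matrix.one_mul, hV]
  simp only [conjTranspose_add, conjTranspose_one, conjTranspose_mul, conjTranspose_conjTranspose,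
    conjTranspose_sub, add_mul, mul_add, sub_mul, mul_sub, Matrix.one_mul, Matrix.mul_one, hVU,
    hU, hV]
  rw [show (4 : Matrix n n R) = 1 + 1 + 1 + 1 by norm_num]
  abel

end Matrix

/-- **Relation between the singular values of `Φₗᴴ Φₗ'` and of `Ψₗ − Ψₗ'`.**
For unitary `Ψₗ, Ψₗ'` and `Φₖ = (1/√2)·[I; Ψₖ]`, the singular values satisfy
`1 − δₘ²(Φₗᴴ Φₗ') = (1/4)·δₘ²(Ψₗ − Ψₗ')` for each `m` (up to the reindexing of
the eigenvalues, which carry no canonical order). -/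
theorem one_sub_singValSq_eq (M : ℕ) (Ψl Ψl' : Matrix (Fin M) (Fin M) ℂ)
    (hΨl : Ψlᴴ * Ψl = 1) (hΨl' : Ψl'ᴴ * Ψl' = 1)
    (Φl : Matrix (Fin M ⊕ Fin M) (Fin M) ℂ)
    (Φl' : Matrix (Fin M ⊕ Fin M) (Fin M) ℂ)
    (hΦl : Φl = ((Real.sqrt 2 / 2 : ℝ) : ℂ) • Matrix.fromRows 1 Ψl)
    (hΦl' : Φl' = ((Real.sqrt 2 / 2 : ℝ) : ℂ) • Matrix.fromRows 1 Ψl') :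
    ∃ e : Fin M ≃ Fin M, ∀ m : Fin M,
      1 - singValSq (Φlᴴ * Φl') m = (1 / 4) * singValSq (Ψl - Ψl') (e m) := by
  set D := Ψl - Ψl'
  have hc : star ((Real.sqrt 2 / 2 : ℝ) : ℂ) * ((Real.sqrt 2 / 2 : ℝ) : ℂ) = 2⁻¹ := by
    rw [Complex.star_def, Complex.conj_ofReal, ← Complex.ofReal_mul, div_mul_div_comm,
      Real.mul_self_sqrt zero_le_two]
    norm_num
  have hG : Φlᴴ * Φl' = (2⁻¹ : ℂ) • (1 + Ψlᴴ * Ψl') := by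
    rw [hΦl, hΦl', conjTranspose_smul, Matrix.smul_mul, Matrix.mul_smul, smul_smul, hc,
      conjTranspose_fromRows_one_mul_fromRows_one]
  have hGram : (Φlᴴ * Φl')ᴴ * (Φlᴴ * Φl') = 1 - (4⁻¹ : ℝ) • (Dᴴ * D) := by
    have h4 : (4 : Matrix (Fin M) (Fin M) ℂ) = (4 : ℝ) • 1 := by
      rw [ofNat_smul_eq_nsmul ℝ 4, nsmul_one, Nat.cast_ofNat]
    rw [hG, conjTranspose_smul, Matrix.smul_mul, Matrix.mul_smul, smul_smul,
      eq_sub_of_add_eq (conjTranspose_mul_self_one_add_add_conjTranspose_mul_self_sub hΨl hΨl'),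
      show star (2⁻¹ : ℂ) * 2⁻¹ = ((4⁻¹ : ℝ) : ℂ) by norm_num, h4, ← Complex.coe_smul]
    module
  have hcfc : cfc (fun x : ℝ ↦ 1 - 4⁻¹ * x) (Dᴴ * D) = 1 - (4⁻¹ : ℝ) • (Dᴴ * D) := by
    have hD : IsSelfAdjoint (Dᴴ * D) := isHermitian_conjTranspose_mul_self D
    rw [cfc_sub (fun _ ↦ 1) (4⁻¹ * ·) (Dᴴ * D), cfc_const_one ℝ (Dᴴ * D),
      cfc_const_mul_id (4⁻¹ : ℝ) (Dᴴ * D)]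
  obtain ⟨e, he⟩ := (isHermitian_conjTranspose_mul_self D).exists_equiv_eigenvalues_of_eq_cfc
    (isHermitian_conjTranspose_mul_self _) (hGram.trans hcfc.symm)
  exact ⟨e, fun m ↦ by unfold singValSq; rw [← he m]; ring⟩
end

section
/- Let Ψ_l, Ψ_{l'} be M×M unitary matrices and Φ_l = (1/√2)[I; Ψ_l], Φ_{l'} = (1/√2)[I; Ψ_{l'}]. Then ∏_{m=1}^M (1 − δ_m²(Φ_l* Φ_{l'}))^{1/(2M)} = (1/2)·|det(Ψ_l − Ψ_{l'})|^{1/M}. -/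
/-!
Write `A = Φₗᴴ Φₗ'`. Since `Φₖ = (1/√2)[I; Ψₖ]`, we get `A = (I + Ψₗᴴ Ψₗ')/2 = Ψₗᴴ (Ψₗ + Ψₗ')/2`, so
`AᴴA = (Ψₗ + Ψₗ')ᴴ(Ψₗ + Ψₗ')/4`, and the parallelogram law for the unitaries `Ψₗ, Ψₗ'` turns
`I - AᴴA` into `(Ψₗ - Ψₗ')ᴴ(Ψₗ - Ψₗ')/4`. The numbers `1 - δₘ²(A)` are the eigenvalues of
`I - AᴴA`, so their product is `det(I - AᴴA) = 4⁻ᴹ |det(Ψₗ - Ψₗ')|²`; taking the `2M`-th root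
gives the claim.
-/

open Matrix

theorem Real.quarter_pow_mul_sq_rpow {n : ℕ} (hn : n ≠ 0) {x : ℝ} (hx : 0 ≤ x) :
    ((1 / 4) ^ n * x ^ 2) ^ ((1 : ℝ) / (2 * n)) = 1 / 2 * x ^ ((1 : ℝ) / n) := by
  have hroot : (1 / 2 * x ^ ((1 : ℝ) / n)) ^ (2 * n) = (1 / 4) ^ n * x ^ 2 := by
    rw [mul_pow, pow_mul, mul_comm 2 n, pow_mul, one_div (n : ℝ),
      Real.rpow_inv_natCast_pow hx hn]
    norm_num
  have hexp : (1 : ℝ) / (2 * n) = ((2 * n : ℕ) : ℝ)⁻¹ := by push_cast; ring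
  rw [← hroot, hexp, Real.pow_rpow_inv_natCast (by positivity) (by positivity)]

namespace Matrix

variable {𝕜 n : Type*} [RCLike 𝕜] [Fintype n]

theorem IsHermitian.det_one_sub_eq_prod [DecidableEq n] {A : Matrix n n 𝕜} (hA : A.IsHermitian) :
    (1 - A).det = ∏ i, (1 - hA.eigenvalues i : 𝕜) := by
  simpa [hA.charpoly_eq, Polynomial.eval_prod] using (A.eval_charpoly 1).symm

theorem det_smul_conjTranspose_mul_self [DecidableEq n] (c : 𝕜) (A : Matrix n n 𝕜) :
    (c • (Aᴴ * A)).det = c ^ Fintype.card n * ‖A.det‖ ^ 2 := by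
  rw [det_smul, det_mul, det_conjTranspose, RCLike.star_def, RCLike.conj_mul]

theorem fromRows_one_conjTranspose_mul_fromRows_one [DecidableEq n] (A B : Matrix n n 𝕜) :
    (fromRows (1 : Matrix n n 𝕜) A)ᴴ * fromRows (1 : Matrix n n 𝕜) B = 1 + Aᴴ * B := by
  rw [conjTranspose_fromRows_eq_fromCols_conjTranspose, fromCols_mul_fromRows,
    conjTranspose_one, Matrix.one_mul]

theorem conjTranspose_mul_add_conjTranspose_mul_sub {m : Type*} (A B : Matrix n m 𝕜) :
    (A + B)ᴴ * (A + B) + (A - B)ᴴ * (A - B) = (2 : 𝕜) • (Aᴴ * A + Bᴴ * B) := by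
  simp only [conjTranspose_add, conjTranspose_sub, Matrix.add_mul, Matrix.mul_add,
    Matrix.sub_mul, Matrix.mul_sub, two_smul]
  abel

theorem one_add_conjTranspose_mul_add_conjTranspose_mul_sub [DecidableEq n] {U V : Matrix n n 𝕜}
    (hU : Uᴴ * U = 1) (hV : Vᴴ * V = 1) :
    (1 + Uᴴ * V)ᴴ * (1 + Uᴴ * V) + (U - V)ᴴ * (U - V) = (4 : 𝕜) • 1 := by
  have hU' : U * Uᴴ = 1 := mul_eq_one_comm.mp hU
  have hfactor : 1 + Uᴴ * V = Uᴴ * (U + V) := by rw [Matrix.mul_add, hU]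
  rw [hfactor, conjTranspose_mul, conjTranspose_conjTranspose, Matrix.mul_assoc,
    ← Matrix.mul_assoc U, hU', Matrix.one_mul, conjTranspose_mul_add_conjTranspose_mul_sub,
    hU, hV, smul_add, ← add_smul]
  norm_num

end Matrix

theorem ofReal_prod_one_sub_singValSq {k M : ℕ} (A : Matrix (Fin k) (Fin M) ℂ) :
    ((∏ m, (1 - singValSq A m) : ℝ) : ℂ) = (1 - Aᴴ * A).det := by
  rw [(isHermitian_conjTranspose_mul_self A).det_one_sub_eq_prod]
  push_cast
  rfl

/-- **Diversity product in terms of the determinant.**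
For unitary `Ψₗ, Ψₗ'` and `Φₖ = (1/√2)·[I; Ψₖ]`,
`(∏ₘ (1 − δₘ²(Φₗᴴ Φₗ')))^(1/(2M)) = (1/2)·|det(Ψₗ − Ψₗ')|^(1/M)`. -/
theorem prod_one_sub_singValSq_eq (M : ℕ) (hM : 0 < M)
    (Ψl Ψl' : Matrix (Fin M) (Fin M) ℂ)
    (hΨl : Ψlᴴ * Ψl = 1) (hΨl' : Ψl'ᴴ * Ψl' = 1)
    (Φl Φl' : Matrix (Fin M ⊕ Fin M) (Fin M) ℂ)
    (hΦl : Φl = ((Real.sqrt 2 / 2 : ℝ) : ℂ) • Matrix.fromRows 1 Ψl)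
    (hΦl' : Φl' = ((Real.sqrt 2 / 2 : ℝ) : ℂ) • Matrix.fromRows 1 Ψl') :
    (∏ m : Fin M, (1 - singValSq (Φlᴴ * Φl') m)) ^ ((1 : ℝ) / (2 * M)) =
      (1 / 2) * ‖(Ψl - Ψl').det‖ ^ ((1 : ℝ) / M) := by
  have hnorm : star ((Real.sqrt 2 / 2 : ℝ) : ℂ) * ((Real.sqrt 2 / 2 : ℝ) : ℂ) = 1 / 2 := by
    rw [Complex.star_def, Complex.conj_ofReal, ← Complex.ofReal_mul, div_mul_div_comm,
      Real.mul_self_sqrt zero_le_two]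
    norm_num
  have hgram : Φlᴴ * Φl' = (1 / 2 : ℂ) • (1 + Ψlᴴ * Ψl') := by
    rw [hΦl, hΦl', conjTranspose_smul, smul_mul, Matrix.mul_smul, smul_smul,
      fromRows_one_conjTranspose_mul_fromRows_one, hnorm]
  have hgap : 1 - (Φlᴴ * Φl')ᴴ * (Φlᴴ * Φl') = (1 / 4 : ℂ) • ((Ψl - Ψl')ᴴ * (Ψl - Ψl')) := by
    rw [hgram, conjTranspose_smul, smul_mul, Matrix.mul_smul, smul_smul,
      eq_sub_of_add_eq (one_add_conjTranspose_mul_add_conjTranspose_mul_sub hΨl hΨl'),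
      show star (1 / 2 : ℂ) * (1 / 2) = 1 / 4 by norm_num]
    module
  have hprod : ∏ m, (1 - singValSq (Φlᴴ * Φl') m) = (1 / 4) ^ M * ‖(Ψl - Ψl').det‖ ^ 2 := by
    apply Complex.ofReal_injective
    rw [ofReal_prod_one_sub_singValSq, hgap, det_smul_conjTranspose_mul_self, Fintype.card_fin]
    simp [mul_comm]
  rw [hprod, Real.quarter_pow_mul_sq_rpow hM.ne' (norm_nonneg _)]
end

section
/- For any constellation V = {Ψ_1, …, Ψ_L} contained in SU(2), the diversity product ∏V = min_{l≠l'} (1/2)|det(Ψ_l − Ψ_{l'})|^{1/2} equals the diversity sum ΣV = min_{l≠l'} (1/(2√2))‖Ψ_l − Ψ_{l'}‖_F. -/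
open Matrix

/-- The Frobenius norm of a complex matrix: `‖A‖_F = √(∑ᵢⱼ |aᵢⱼ|²)`. -/
noncomputable def frobNorm {k l : ℕ} (A : Matrix (Fin k) (Fin l) ℂ) : ℝ :=
  Real.sqrt (∑ i, ∑ j, ‖A i j‖ ^ 2)

/-! On `SU(2)` the conjugate transpose is the adjugate. Since the adjugate of a `2 × 2` matrix is
linear in the matrix, a difference `D = X - Y` of two elements of `SU(2)` still satisfies
`Dᴴ = adj D`, hence `D * Dᴴ = det D • 1`, and taking traces gives `‖D‖_F² = 2 det D`. -/

namespace Matrix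

theorem conjTranspose_eq_adjugate_of_unitary_of_det_eq_one {n R : Type*} [Fintype n]
    [DecidableEq n] [CommRing R] [StarRing R] {X : Matrix n n R} (hX : Xᴴ * X = 1)
    (hdet : X.det = 1) : Xᴴ = adjugate X := by
  calc Xᴴ = (adjugate X * X) * Xᴴ := by rw [adjugate_mul, hdet, one_smul, Matrix.one_mul]
    _ = adjugate X := by rw [Matrix.mul_assoc, mul_eq_one_comm.mp hX, Matrix.mul_one]

theorem adjugate_fin_two_sub {R : Type*} [CommRing R] (A B : Matrix (Fin 2) (Fin 2) R) :
    adjugate (A - B) = adjugate A - adjugate B := by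
  simp only [adjugate_fin_two, sub_apply]
  ext i j
  fin_cases i <;> fin_cases j <;> simp <;> ring

end Matrix

theorem ofReal_frobNorm_sq {k l : ℕ} (A : Matrix (Fin k) (Fin l) ℂ) :
    ((frobNorm A ^ 2 : ℝ) : ℂ) = (A * Aᴴ).trace := by
  rw [frobNorm, Real.sq_sqrt (by positivity)]
  simp [trace, mul_apply, Complex.mul_conj, Complex.normSq_eq_norm_sq]

theorem det_eq_frobNorm_sq_div_two {D : Matrix (Fin 2) (Fin 2) ℂ} (hD : Dᴴ = adjugate D) :
    D.det = ((frobNorm D ^ 2 / 2 : ℝ) : ℂ) := by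
  have htrace : (D * Dᴴ).trace = 2 * D.det := by
    rw [hD, mul_adjugate, trace_smul, trace_one, Fintype.card_fin, smul_eq_mul]
    push_cast; ring
  rw [Complex.ofReal_div, ofReal_frobNorm_sq, htrace]
  push_cast; ring

theorem half_sqrt_norm_det_sub_eq_of_specialUnitary {X Y : Matrix (Fin 2) (Fin 2) ℂ}
    (hX : Xᴴ * X = 1 ∧ X.det = 1) (hY : Yᴴ * Y = 1 ∧ Y.det = 1) :
    (1 / 2) * Real.sqrt (‖(X - Y).det‖) = (1 / (2 * Real.sqrt 2)) * frobNorm (X - Y) := by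
  have hD : (X - Y)ᴴ = adjugate (X - Y) := by
    rw [conjTranspose_sub, adjugate_fin_two_sub,
      conjTranspose_eq_adjugate_of_unitary_of_det_eq_one hX.1 hX.2,
      conjTranspose_eq_adjugate_of_unitary_of_det_eq_one hY.1 hY.2]
  have hF : 0 ≤ frobNorm (X - Y) := Real.sqrt_nonneg _
  rw [det_eq_frobNorm_sq_div_two hD, Complex.norm_real, Real.norm_of_nonneg (by positivity),
    Real.sqrt_div' _ (by norm_num), Real.sqrt_sq hF]
  field_simp

theorem su2_divProd_eq_divSum_general (V : Finset (Matrix (Fin 2) (Fin 2) ℂ))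
    (hSU : ∀ X ∈ V, Xᴴ * X = 1 ∧ X.det = 1) :
    sInf {r : ℝ | ∃ X ∈ V, ∃ Y ∈ V, X ≠ Y ∧
        r = (1 / 2) * Real.sqrt (‖(X - Y).det‖)} =
      sInf {r : ℝ | ∃ X ∈ V, ∃ Y ∈ V, X ≠ Y ∧
        r = (1 / (2 * Real.sqrt 2)) * frobNorm (X - Y)} := by
  congr 1
  ext r
  refine exists_congr fun X => and_congr_right fun hX => ?_
  refine exists_congr fun Y => and_congr_right fun hY => ?_
  rw [half_sqrt_norm_det_sub_eq_of_specialUnitary (hSU X hX) (hSU Y hY)]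

/-- **For constellations inside `SU(2)`, the diversity product equals the
diversity sum.**  For a finite set `V` of matrices in `SU(2)`,
`min_{X ≠ Y} (1/2)|det(X − Y)|^{1/2} = min_{X ≠ Y} (1/(2√2))‖X − Y‖_F`. -/
theorem su2_divProd_eq_divSum (V : Finset (Matrix (Fin 2) (Fin 2) ℂ))
    (hcard : 2 ≤ V.card)
    (hSU : ∀ X ∈ V, Xᴴ * X = 1 ∧ X.det = 1) :
    sInf {r : ℝ | ∃ X ∈ V, ∃ Y ∈ V, X ≠ Y ∧
        r = (1 / 2) * Real.sqrt (‖(X - Y).det‖)} =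
      sInf {r : ℝ | ∃ X ∈ V, ∃ Y ∈ V, X ≠ Y ∧
        r = (1 / (2 * Real.sqrt 2)) * frobNorm (X - Y)} :=
  su2_divProd_eq_divSum_general V hSU
end

section
/- Let S(m,n) denote the set of n×m real matrices Φ = (Φ_{ij}) with 0 ≤ Φ_{ij} ≤ π and Σ_{i=1}^n Φ_{ij} = π for each column j. Define d_i(Φ) = ∏_{j=1}^m sin(Φ_{ij}). Then max over Φ ∈ S(m,n) of min over i of d_i(Φ) equals (sin(π/n))^m. -/
/-!
Fix a column `j`. By AM-GM and the concavity of `sin` on `[0, π]`, the product over `i` of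
`sin Φᵢⱼ` is at most `sin(π/n)ⁿ`. Taking the product over all columns, the `n`-th power of the
smallest row product is at most the product of all `n` row products, which is at most
`sin(π/n)ⁿᵐ`. The constant matrix `Φᵢⱼ = π/n` attains the bound.
-/

open Real Finset

variable {ι : Type*} [Fintype ι]

theorem Real.prod_le_sum_div_card_pow (z : ι → ℝ) (hz : ∀ i, 0 ≤ z i) :
    ∏ i, z i ≤ ((∑ i, z i) / Fintype.card ι) ^ Fintype.card ι := by
  rcases isEmpty_or_nonempty ι with hι | hι
  · simp
  have hcard : (Fintype.card ι : ℝ) ≠ 0 := by positivity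
  have amgm := geom_mean_le_arith_mean_weighted univ (fun _ => (Fintype.card ι : ℝ)⁻¹) z
    (fun _ _ => by positivity) (by simp [hcard]) (fun i _ => hz i)
  calc ∏ i, z i = (∏ i, z i ^ (Fintype.card ι : ℝ)⁻¹) ^ Fintype.card ι := by
        rw [← prod_pow]
        refine prod_congr rfl fun i _ => ?_
        rw [← rpow_natCast, ← rpow_mul (hz i), inv_mul_cancel₀ hcard, rpow_one]
    _ ≤ ((∑ i, z i) / Fintype.card ι) ^ Fintype.card ι := by
        rw [div_eq_inv_mul, mul_sum]
        gcongr
        exact prod_nonneg fun i _ => rpow_nonneg (hz i) _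

theorem Real.sum_sin_div_card_le_sin_sum_div_card [Nonempty ι] (x : ι → ℝ)
    (hx : ∀ i, x i ∈ Set.Icc 0 π) :
    (∑ i, sin (x i)) / Fintype.card ι ≤ sin ((∑ i, x i) / Fintype.card ι) := by
  have hcard : (Fintype.card ι : ℝ) ≠ 0 := by positivity
  have jensen := strictConcaveOn_sin_Icc.concaveOn.le_map_sum (t := univ)
    (w := fun _ => (Fintype.card ι : ℝ)⁻¹) (p := x)
    (fun _ _ => by positivity) (by simp [hcard]) (fun i _ => hx i)
  simpa only [smul_eq_mul, ← mul_sum, div_eq_inv_mul] using jensen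

theorem Real.prod_sin_le_sin_sum_div_card_pow [Nonempty ι] (x : ι → ℝ)
    (hx : ∀ i, x i ∈ Set.Icc 0 π) :
    ∏ i, sin (x i) ≤ sin ((∑ i, x i) / Fintype.card ι) ^ Fintype.card ι := by
  have hsin : ∀ i, 0 ≤ sin (x i) := fun i => sin_nonneg_of_mem_Icc (hx i)
  calc ∏ i, sin (x i) ≤ ((∑ i, sin (x i)) / Fintype.card ι) ^ Fintype.card ι :=
        prod_le_sum_div_card_pow _ hsin
    _ ≤ sin ((∑ i, x i) / Fintype.card ι) ^ Fintype.card ι := by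
        gcongr
        · exact div_nonneg (sum_nonneg fun i _ => hsin i) (Nat.cast_nonneg _)
        · exact sum_sin_div_card_le_sin_sum_div_card x hx

theorem max_min_prod_sin_general (n m : ℕ) (hn : 0 < n) :
    IsGreatest
      {d : ℝ | ∃ Φ : Fin n → Fin m → ℝ,
        (∀ i j, 0 ≤ Φ i j ∧ Φ i j ≤ π) ∧
        (∀ j, ∑ i, Φ i j = π) ∧
        d = sInf (Set.range fun i : Fin n => ∏ j, Real.sin (Φ i j))}
      (Real.sin (π / n) ^ m) := by
  have : Nonempty (Fin n) := ⟨⟨0, hn⟩⟩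
  have hπn : π / n ∈ Set.Icc 0 π := ⟨by positivity, div_le_self pi_pos.le (by exact_mod_cast hn)⟩
  refine ⟨⟨fun _ _ => π / n, fun _ _ => hπn, fun _ => ?_, ?_⟩, ?_⟩
  · simp [mul_div_cancel₀ _ (show (n : ℝ) ≠ 0 by positivity)]
  · simp [Set.range_const]
  rintro _ ⟨Φ, hΦ, hcol, rfl⟩
  set row : Fin n → ℝ := fun i => ∏ j, sin (Φ i j)
  have hrow : ∀ i, 0 ≤ row i := fun i => prod_nonneg fun j _ => sin_nonneg_of_mem_Icc (hΦ i j)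
  have hmin_nonneg : 0 ≤ sInf (Set.range row) := le_csInf (Set.range_nonempty _) (by simpa)
  have hmin_le : ∀ i, sInf (Set.range row) ≤ row i := fun i =>
    csInf_le (Set.finite_range row).bddBelow ⟨i, rfl⟩
  refine le_of_pow_le_pow_left₀ hn.ne' (pow_nonneg (sin_nonneg_of_mem_Icc hπn) m) ?_
  calc sInf (Set.range row) ^ n = ∏ _i : Fin n, sInf (Set.range row) := by simp
    _ ≤ ∏ i, row i := prod_le_prod (fun _ _ => hmin_nonneg) (fun i _ => hmin_le i)
    _ = ∏ j, ∏ i, sin (Φ i j) := prod_comm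
    _ ≤ ∏ _j : Fin m, sin (π / n) ^ n := by
        refine prod_le_prod (fun j _ => prod_nonneg fun i _ => sin_nonneg_of_mem_Icc (hΦ i j))
          fun j _ => ?_
        simpa [hcol j] using prod_sin_le_sin_sum_div_card_pow (Φ · j) (hΦ · j)
    _ = (sin (π / n) ^ m) ^ n := by simp [← pow_mul, mul_comm]

/-- **Lemma on products of sines.**
Over all `n × m` matrices `Φ` with entries in `[0, π]` whose columns each sum
to `π`, the maximum of `minᵢ ∏ⱼ sin Φᵢⱼ` equals `(sin(π/n))^m`. -/
theorem max_min_prod_sin (n m : ℕ) (hn : 0 < n) (hm : 0 < m) :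
    IsGreatest
      {d : ℝ | ∃ Φ : Fin n → Fin m → ℝ,
        (∀ i j, 0 ≤ Φ i j ∧ Φ i j ≤ π) ∧
        (∀ j, ∑ i, Φ i j = π) ∧
        d = sInf (Set.range fun i : Fin n => ∏ j, Real.sin (Φ i j))}
      (Real.sin (π / n) ^ m) :=
  max_min_prod_sin_general n m hn
end

section
/- The function x ↦ sin²(x) is concave on the interval [π/4, π/2]; consequently for x, y, z, x₁, y₁, z₁ ∈ (π/4, π/2) with x + y + z = π and x₁ + y₁ + z₁ = π, one has sin²x + sin²y + sin²z + sin²x₁ + sin²y₁ + sin²z₁ ≤ 9/2. -/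
/-!
The second derivative of `sin²` is `2 cos 2x`, which is nonpositive on `[π/4, 3π/4]`, so `sin²` is
concave there. Three angles in that interval summing to `π` have centroid `π/3`, so by Jensen
their `sin²` values add up to at most `3 sin²(π/3) = 9/4`.
-/

open Real Set

theorem concaveOn_sin_sq_Icc : ConcaveOn ℝ (Icc (π / 4) (3 * π / 4)) (fun x => sin x ^ 2) := by
  refine concaveOn_of_hasDerivWithinAt2_nonpos (f' := fun x => sin (2 * x))
    (f'' := fun x => 2 * cos (2 * x)) (convex_Icc _ _) (continuous_sin.pow 2).continuousOn
    (fun x _ => ?_) (fun x _ => ?_) (fun x hx => ?_)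
  · exact (((hasDerivAt_sin x).pow 2).congr_deriv (by rw [sin_two_mul]; ring)).hasDerivWithinAt
  · exact ((((hasDerivAt_id x).const_mul 2).sin).congr_deriv
      (by simp only [id, mul_one]; ring)).hasDerivWithinAt
  · rw [interior_Icc] at hx
    have := cos_nonpos_of_pi_div_two_le_of_le (x := 2 * x) (by linarith [hx.1]) (by linarith [hx.2])
    linarith

theorem ConcaveOn.add_add_le_three_mul_map_smul {E : Type*} [AddCommGroup E] [Module ℝ E]
    {s : Set E} {f : E → ℝ} (hf : ConcaveOn ℝ s f) {a b c : E} (ha : a ∈ s) (hb : b ∈ s)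
    (hc : c ∈ s) : f a + f b + f c ≤ 3 * f ((1 / 3 : ℝ) • (a + b + c)) := by
  have := hf.le_map_sum (t := Finset.univ) (w := fun _ => (1 / 3 : ℝ)) (p := ![a, b, c])
    (by norm_num) (by norm_num) (by simp [Fin.forall_fin_succ, ha, hb, hc])
  simp only [Fin.sum_univ_three, Matrix.cons_val, smul_eq_mul, ← smul_add] at this
  linarith

theorem sin_sq_pi_div_three : sin (π / 3) ^ 2 = 3 / 4 := by
  rw [sin_pi_div_three, div_pow, sq_sqrt (by norm_num : (0 : ℝ) ≤ 3)]
  norm_num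

theorem sin_sq_add_sin_sq_add_sin_sq_le {a b c : ℝ} (ha : a ∈ Icc (π / 4) (3 * π / 4))
    (hb : b ∈ Icc (π / 4) (3 * π / 4)) (hc : c ∈ Icc (π / 4) (3 * π / 4)) (hsum : a + b + c = π) :
    sin a ^ 2 + sin b ^ 2 + sin c ^ 2 ≤ 9 / 4 := by
  have := concaveOn_sin_sq_Icc.add_add_le_three_mul_map_smul ha hb hc
  rw [hsum, smul_eq_mul, one_div_mul_eq_div, sin_sq_pi_div_three] at this
  linarith

/-- **Concavity of `sin²` on `[π/4, π/2]` and the resulting Jensen bound.**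
`x ↦ sin² x` is concave on `[π/4, π/2]`; consequently, for
`x, y, z, x₁, y₁, z₁ ∈ (π/4, π/2)` with `x + y + z = π` and `x₁ + y₁ + z₁ = π`,
`sin²x + sin²y + sin²z + sin²x₁ + sin²y₁ + sin²z₁ ≤ 9/2`. -/
theorem sin_sq_concave_and_bound :
    ConcaveOn ℝ (Set.Icc (π / 4) (π / 2)) (fun x => Real.sin x ^ 2) ∧
    ∀ x y z x₁ y₁ z₁ : ℝ,
      x ∈ Set.Ioo (π / 4) (π / 2) → y ∈ Set.Ioo (π / 4) (π / 2) →
      z ∈ Set.Ioo (π / 4) (π / 2) → x₁ ∈ Set.Ioo (π / 4) (π / 2) →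
      y₁ ∈ Set.Ioo (π / 4) (π / 2) → z₁ ∈ Set.Ioo (π / 4) (π / 2) →
      x + y + z = π → x₁ + y₁ + z₁ = π →
      Real.sin x ^ 2 + Real.sin y ^ 2 + Real.sin z ^ 2 +
        Real.sin x₁ ^ 2 + Real.sin y₁ ^ 2 + Real.sin z₁ ^ 2 ≤ 9 / 2 := by
  have hsub : Icc (π / 4) (π / 2) ⊆ Icc (π / 4) (3 * π / 4) :=
    Icc_subset_Icc_right (by linarith [pi_pos])
  have hmem {t : ℝ} (ht : t ∈ Ioo (π / 4) (π / 2)) : t ∈ Icc (π / 4) (3 * π / 4) :=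
    hsub (Ioo_subset_Icc_self ht)
  refine ⟨concaveOn_sin_sq_Icc.subset hsub (convex_Icc _ _),
    fun x y z x₁ y₁ z₁ hx hy hz hx₁ hy₁ hz₁ hs hs₁ => ?_⟩
  linarith [sin_sq_add_sin_sq_add_sin_sq_le (hmem hx) (hmem hy) (hmem hz) hs,
    sin_sq_add_sin_sq_add_sin_sq_le (hmem hx₁) (hmem hy₁) (hmem hz₁) hs₁]
end

section
/- For any set V of three 2×2 unitary matrices, the diversity product min_{X ≠ Y ∈ V}(1/2)|det(X − Y)|^{1/2} is at most √3/2, and this bound is attained by V = {I, diag(e^{2πi/3}, e^{−2πi/3}), diag(e^{4πi/3}, e^{−4πi/3})}. -/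
open Matrix

/-- The pairwise diversity-product distance `(1/2)|det(X − Y)|^{1/2}` for
`2 × 2` matrices. -/
noncomputable def dprod (X Y : Matrix (Fin 2) (Fin 2) ℂ) : ℝ :=
  (1 / 2) * Real.sqrt (‖(X - Y).det‖)

/-!
For a `2 × 2` matrix, AM-GM gives `|det M| ≤ ‖M‖_F² / 2`. A unitary `2 × 2` matrix has
`‖X‖_F² = 2`, and `‖X - Y‖² + ‖X - Z‖² + ‖Y - Z‖² = 3 (‖X‖² + ‖Y‖² + ‖Z‖²) - ‖X + Y + Z‖² ≤ 18`,
so one of the three differences has `‖·‖_F² ≤ 6`, hence `|det| ≤ 3` and diversity product at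
most `√3 / 2`. For the diagonal constellation built from a primitive cube root of unity `ω`
all three determinants equal `3`.
-/

section FrobeniusNormSq

variable {m n : Type*} [Fintype m] [Fintype n]

def frobeniusNormSq {α : Type*} [Norm α] (M : Matrix m n α) : ℝ :=
  ∑ i, ∑ j, ‖M i j‖ ^ 2

theorem frobeniusNormSq_eq_re_trace {𝕜 : Type*} [RCLike 𝕜] (M : Matrix m n 𝕜) :
    frobeniusNormSq M = RCLike.re (Mᴴ * M).trace := by
  simp only [frobeniusNormSq, trace, diag, mul_apply, conjTranspose_apply, map_sum,
    RCLike.star_def, RCLike.conj_mul, ← RCLike.ofReal_pow, RCLike.ofReal_re]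
  exact Finset.sum_comm

theorem frobeniusNormSq_of_conjTranspose_mul_self_eq_one {𝕜 : Type*} [RCLike 𝕜] [DecidableEq n]
    {M : Matrix m n 𝕜} (h : Mᴴ * M = 1) : frobeniusNormSq M = Fintype.card n := by
  simp [frobeniusNormSq_eq_re_trace, h]

theorem norm_sub_sq_add_norm_sub_sq_add_norm_sub_sq_le {E : Type*} [NormedAddCommGroup E]
    [InnerProductSpace ℝ E] (a b c : E) :
    ‖a - b‖ ^ 2 + ‖a - c‖ ^ 2 + ‖b - c‖ ^ 2 ≤ 3 * (‖a‖ ^ 2 + ‖b‖ ^ 2 + ‖c‖ ^ 2) := by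
  have h := sq_nonneg ‖a + b + c‖
  simp only [norm_sub_sq_real, norm_add_sq_real, inner_add_left] at h ⊢
  linarith

theorem frobeniusNormSq_sub_add_frobeniusNormSq_sub_add_frobeniusNormSq_sub_le {E : Type*}
    [NormedAddCommGroup E] [InnerProductSpace ℝ E] (X Y Z : Matrix m n E) :
    frobeniusNormSq (X - Y) + frobeniusNormSq (X - Z) + frobeniusNormSq (Y - Z) ≤
      3 * (frobeniusNormSq X + frobeniusNormSq Y + frobeniusNormSq Z) := by
  simp only [frobeniusNormSq, Matrix.sub_apply, ← Finset.sum_add_distrib, Finset.mul_sum]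
  gcongr with i _ j _
  exact norm_sub_sq_add_norm_sub_sq_add_norm_sub_sq_le _ _ _

theorem min_frobeniusNormSq_sub_le_of_unitary {𝕜 : Type*} [RCLike 𝕜] [DecidableEq n]
    {X Y Z : Matrix m n 𝕜} (hX : Xᴴ * X = 1) (hY : Yᴴ * Y = 1) (hZ : Zᴴ * Z = 1) :
    min (min (frobeniusNormSq (X - Y)) (frobeniusNormSq (X - Z))) (frobeniusNormSq (Y - Z)) ≤
      3 * Fintype.card n := by
  have hsum := frobeniusNormSq_sub_add_frobeniusNormSq_sub_add_frobeniusNormSq_sub_le X Y Z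
  rw [frobeniusNormSq_of_conjTranspose_mul_self_eq_one hX,
    frobeniusNormSq_of_conjTranspose_mul_self_eq_one hY,
    frobeniusNormSq_of_conjTranspose_mul_self_eq_one hZ] at hsum
  set a := frobeniusNormSq (X - Y)
  set b := frobeniusNormSq (X - Z)
  set c := frobeniusNormSq (Y - Z)
  linarith [min_le_right (min a b) c, (min_le_left (min a b) c).trans (min_le_left a b),
    (min_le_left (min a b) c).trans (min_le_right a b)]

theorem norm_det_fin_two_le {R : Type*} [NormedCommRing R] (M : Matrix (Fin 2) (Fin 2) R) :
    ‖M.det‖ ≤ frobeniusNormSq M / 2 := by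
  simp only [det_fin_two, frobeniusNormSq, Fin.sum_univ_two]
  calc ‖M 0 0 * M 1 1 - M 0 1 * M 1 0‖
      ≤ ‖M 0 0‖ * ‖M 1 1‖ + ‖M 0 1‖ * ‖M 1 0‖ :=
        (norm_sub_le _ _).trans (add_le_add (norm_mul_le _ _) (norm_mul_le _ _))
    _ ≤ _ := by nlinarith [sq_nonneg (‖M 0 0‖ - ‖M 1 1‖), sq_nonneg (‖M 0 1‖ - ‖M 1 0‖)]

end FrobeniusNormSq

theorem dprod_le_sqrt_frobeniusNormSq (X Y : Matrix (Fin 2) (Fin 2) ℂ) :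
    dprod X Y ≤ √(frobeniusNormSq (X - Y) / 2) / 2 := by
  rw [dprod, one_div_mul_eq_div]
  gcongr
  exact norm_det_fin_two_le _

theorem min_dprod_le_of_unitary {X Y Z : Matrix (Fin 2) (Fin 2) ℂ}
    (hX : Xᴴ * X = 1) (hY : Yᴴ * Y = 1) (hZ : Zᴴ * Z = 1) :
    min (min (dprod X Y) (dprod X Z)) (dprod Y Z) ≤ √3 / 2 := by
  have hmono : Monotone fun t : ℝ => √(t / 2) / 2 := fun s t hst => by
    dsimp only; gcongr
  calc min (min (dprod X Y) (dprod X Z)) (dprod Y Z)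
      ≤ min (min (√(frobeniusNormSq (X - Y) / 2) / 2) (√(frobeniusNormSq (X - Z) / 2) / 2))
          (√(frobeniusNormSq (Y - Z) / 2) / 2) := by
        gcongr <;> exact dprod_le_sqrt_frobeniusNormSq _ _
    _ = √(min (min (frobeniusNormSq (X - Y)) (frobeniusNormSq (X - Z)))
          (frobeniusNormSq (Y - Z)) / 2) / 2 := by
        rw [hmono.map_min, hmono.map_min]
    _ ≤ √(3 * Fintype.card (Fin 2) / 2) / 2 :=
        hmono (min_frobeniusNormSq_sub_le_of_unitary hX hY hZ)
    _ = √3 / 2 := by norm_num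

theorem dprod_eq_of_det_sub_eq {X Y : Matrix (Fin 2) (Fin 2) ℂ} {r : ℝ} (hr : 0 ≤ r)
    (h : (X - Y).det = r) : dprod X Y = √r / 2 := by
  rw [dprod, h, Complex.norm_of_nonneg hr, one_div_mul_eq_div]

theorem one_sub_mul_one_sub_sq {R : Type*} [CommRing R] {ω : R} (h : 1 + ω + ω ^ 2 = 0) :
    (1 - ω) * (1 - ω ^ 2) = 3 := by
  linear_combination (ω - 2) * h

theorem sub_sq_mul_sq_sub {R : Type*} [CommRing R] {ω : R} (h : 1 + ω + ω ^ 2 = 0) :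
    (ω - ω ^ 2) * (ω ^ 2 - ω) = 3 := by
  linear_combination (-ω ^ 2 + 3 * ω - 3) * h

theorem min_dprod_diagonal_cube_root {ω : ℂ} (hω : 1 + ω + ω ^ 2 = 0) :
    min (min (dprod 1 (diagonal ![ω, ω ^ 2])) (dprod 1 (diagonal ![ω ^ 2, ω])))
      (dprod (diagonal ![ω, ω ^ 2]) (diagonal ![ω ^ 2, ω])) = √3 / 2 := by
  have h₁ : (1 - diagonal ![ω, ω ^ 2]).det = (3 : ℝ) := by
    simpa [det_fin_two] using one_sub_mul_one_sub_sq hω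
  have h₂ : (1 - diagonal ![ω ^ 2, ω]).det = (3 : ℝ) := by
    simpa [det_fin_two, mul_comm] using one_sub_mul_one_sub_sq hω
  have h₃ : (diagonal ![ω, ω ^ 2] - diagonal ![ω ^ 2, ω]).det = (3 : ℝ) := by
    simpa using sub_sq_mul_sq_sub hω
  rw [dprod_eq_of_det_sub_eq zero_le_three h₁, dprod_eq_of_det_sub_eq zero_le_three h₂,
    dprod_eq_of_det_sub_eq zero_le_three h₃, min_self, min_self]

theorem Complex.exp_eq_exp_pow_of_eq_nat_mul_add_int_mul_two_pi_mul_I {z w : ℂ} (k : ℕ) (n : ℤ)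
    (h : z = k * w + n * (2 * Real.pi * Complex.I)) : Complex.exp z = Complex.exp w ^ k := by
  rw [← Complex.exp_nat_mul, Complex.exp_eq_exp_iff_exists_int]
  exact ⟨n, h⟩

/-- **Optimal diversity product of three-element `2 × 2` unitary
constellations.**  Any three pairwise distinct `2 × 2` unitary matrices have
diversity product at most `√3/2`, and this bound is attained by
`{I, diag(e^{2πi/3}, e^{−2πi/3}), diag(e^{4πi/3}, e^{−4πi/3})}`. -/
theorem three_element_dprod_optimal :
    (∀ X Y Z : Matrix (Fin 2) (Fin 2) ℂ,
      Xᴴ * X = 1 → Yᴴ * Y = 1 → Zᴴ * Z = 1 →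
      X ≠ Y → X ≠ Z → Y ≠ Z →
      min (min (dprod X Y) (dprod X Z)) (dprod Y Z) ≤ Real.sqrt 3 / 2) ∧
    (let A₀ : Matrix (Fin 2) (Fin 2) ℂ :=
        Matrix.diagonal ![Complex.exp (2 * Real.pi * Complex.I / 3),
          Complex.exp (-(2 * Real.pi * Complex.I) / 3)]
     let B₀ : Matrix (Fin 2) (Fin 2) ℂ :=
        Matrix.diagonal ![Complex.exp (4 * Real.pi * Complex.I / 3),
          Complex.exp (-(4 * Real.pi * Complex.I) / 3)]
     min (min (dprod 1 A₀) (dprod 1 B₀)) (dprod A₀ B₀) = Real.sqrt 3 / 2) := by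
  constructor
  · exact fun X Y Z hX hY hZ _ _ _ => min_dprod_le_of_unitary hX hY hZ
  · intro A₀ B₀
    set ω := Complex.exp (2 * Real.pi * Complex.I / 3)
    have hω : 1 + ω + ω ^ 2 = 0 := by
      simpa [Finset.sum_range_succ, add_assoc] using
        (Complex.isPrimitiveRoot_exp 3 three_ne_zero).geom_sum_eq_zero (by norm_num)
    have e₁ : Complex.exp (-(2 * Real.pi * Complex.I) / 3) = ω ^ 2 :=
      Complex.exp_eq_exp_pow_of_eq_nat_mul_add_int_mul_two_pi_mul_I 2 (-1) (by push_cast; ring)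
    have e₂ : Complex.exp (4 * Real.pi * Complex.I / 3) = ω ^ 2 :=
      Complex.exp_eq_exp_pow_of_eq_nat_mul_add_int_mul_two_pi_mul_I 2 0 (by push_cast; ring)
    have e₃ : Complex.exp (-(4 * Real.pi * Complex.I) / 3) = ω :=
      (Complex.exp_eq_exp_pow_of_eq_nat_mul_add_int_mul_two_pi_mul_I 1 (-1)
        (by push_cast; ring)).trans (pow_one ω)
    simpa only [A₀, B₀, e₁, e₂, e₃] using min_dprod_diagonal_cube_root hω
end

section
/- Let x_{ij}, i = 1,…,n, j = 1,…,m, be reals in [0, π] with Σ_{i=1}^n x_{ij} = π for each j. If d ≤ ∏_{j=1}^m sin(x_{ij}) for every i, then d ≤ (sin(π/n))^m. -/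
/-!
For each column `j`, concavity of `sin` on `[0, π]` and AM–GM give
`∏ᵢ sin (x i j) ≤ sin (π / n) ^ n`. Multiplying over the columns, `d ^ n` is at most the product
of all `sin (x i j)`, hence at most `(sin (π / n) ^ m) ^ n`.
-/

open Finset Real

namespace Real

variable {ι : Type*}

theorem prod_le_mean_pow_card (s : Finset ι) {z : ι → ℝ} (hz : ∀ i ∈ s, 0 ≤ z i) :
    ∏ i ∈ s, z i ≤ ((∑ i ∈ s, z i) / #s) ^ #s := by
  rcases s.eq_empty_or_nonempty with rfl | hs
  · simp
  have hcard : (#s : ℝ) ≠ 0 := by exact_mod_cast hs.card_pos.ne'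
  have hgm := geom_mean_le_arith_mean_weighted s (fun _ => (#s : ℝ)⁻¹) z
    (fun _ _ => by positivity) (by simp [hcard]) hz
  calc ∏ i ∈ s, z i = (∏ i ∈ s, z i ^ (#s : ℝ)⁻¹) ^ #s := by
        rw [finsetProd_rpow _ _ hz, rpow_inv_natCast_pow (prod_nonneg hz) hs.card_pos.ne']
    _ ≤ (∑ i ∈ s, (#s : ℝ)⁻¹ * z i) ^ #s :=
        pow_le_pow_left₀ (prod_nonneg fun i hi => rpow_nonneg (hz i hi) _) hgm _
    _ = ((∑ i ∈ s, z i) / #s) ^ #s := by rw [← mul_sum, inv_mul_eq_div]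

end Real

theorem ConcaveOn.prod_le_map_mean_pow_card {ι E : Type*} [AddCommGroup E] [Module ℝ E]
    {D : Set E} {f : E → ℝ} (hf : ConcaveOn ℝ D f) (s : Finset ι) {x : ι → E}
    (hx : ∀ i ∈ s, x i ∈ D) (hf₀ : ∀ i ∈ s, 0 ≤ f (x i)) :
    ∏ i ∈ s, f (x i) ≤ f ((#s : ℝ)⁻¹ • ∑ i ∈ s, x i) ^ #s := by
  rcases s.eq_empty_or_nonempty with rfl | hs
  · simp
  have hcard : (#s : ℝ) ≠ 0 := by exact_mod_cast hs.card_pos.ne'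
  have hjensen : (∑ i ∈ s, f (x i)) / #s ≤ f ((#s : ℝ)⁻¹ • ∑ i ∈ s, x i) := by
    simpa [← smul_sum, inv_mul_eq_div, ← sum_div] using
      hf.le_map_sum (w := fun _ => (#s : ℝ)⁻¹) (fun _ _ => by positivity) (by simp [hcard]) hx
  calc ∏ i ∈ s, f (x i) ≤ ((∑ i ∈ s, f (x i)) / #s) ^ #s := prod_le_mean_pow_card s hf₀
    _ ≤ f ((#s : ℝ)⁻¹ • ∑ i ∈ s, x i) ^ #s :=
        pow_le_pow_left₀ (div_nonneg (sum_nonneg hf₀) (Nat.cast_nonneg _)) hjensen _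

theorem le_of_forall_le_of_prod_le_pow_card {ι : Type*} {s : Finset ι} (hs : s.Nonempty)
    {a : ι → ℝ} {c d : ℝ} (hc : 0 ≤ c) (hd : ∀ i ∈ s, d ≤ a i) (ha : ∏ i ∈ s, a i ≤ c ^ #s) :
    d ≤ c := by
  rcases le_or_gt d 0 with hd₀ | hd₀
  · exact hd₀.trans hc
  refine le_of_pow_le_pow_left₀ hs.card_pos.ne' hc ?_
  calc d ^ #s = ∏ _i ∈ s, d := (prod_const d).symm
    _ ≤ ∏ i ∈ s, a i := prod_le_prod (fun _ _ => hd₀.le) hd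
    _ ≤ c ^ #s := ha

theorem le_sin_pow_of_le_prod_sin_general (n m : ℕ) (hn : 0 < n)
    (x : Fin n → Fin m → ℝ)
    (hrange : ∀ i j, 0 ≤ x i j ∧ x i j ≤ π)
    (hsum : ∀ j, ∑ i, x i j = π)
    (d : ℝ) (hd : ∀ i, d ≤ ∏ j, Real.sin (x i j)) :
    d ≤ Real.sin (π / n) ^ m := by
  have hsin : ∀ i j, 0 ≤ sin (x i j) := fun i j =>
    sin_nonneg_of_nonneg_of_le_pi (hrange i j).1 (hrange i j).2
  have hcolumn : ∀ j, ∏ i, sin (x i j) ≤ sin (π / n) ^ n := fun j => by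
    simpa [hsum j, inv_mul_eq_div] using strictConcaveOn_sin_Icc.concaveOn.prod_le_map_mean_pow_card
      univ (fun i _ => hrange i j) (fun i _ => hsin i j)
  have hsin_pi_div : 0 ≤ sin (π / n) :=
    sin_nonneg_of_nonneg_of_le_pi (by positivity) (div_le_self pi_pos.le (by exact_mod_cast hn))
  refine le_of_forall_le_of_prod_le_pow_card (univ_nonempty_iff.2 ⟨⟨0, hn⟩⟩)
    (pow_nonneg hsin_pi_div m) (fun i _ => hd i) ?_
  calc ∏ i, ∏ j, sin (x i j) = ∏ j, ∏ i, sin (x i j) := prod_comm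
    _ ≤ ∏ _j : Fin m, sin (π / n) ^ n :=
        prod_le_prod (fun j _ => prod_nonneg fun i _ => hsin i j) fun j _ => hcolumn j
    _ = (sin (π / n) ^ m) ^ #(univ : Finset (Fin n)) := by
        simp [← pow_mul, mul_comm]

/-- **AM–GM / concavity bound for products of sines.**
Let `x i j ∈ [0, π]` for `i = 1,…,n`, `j = 1,…,m`, with `∑ᵢ x i j = π` for each
`j`.  If `d ≤ ∏ⱼ sin (x i j)` for every `i`, then `d ≤ (sin(π/n))^m`. -/
theorem le_sin_pow_of_le_prod_sin (n m : ℕ) (hn : 0 < n) (hm : 0 < m)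
    (x : Fin n → Fin m → ℝ)
    (hrange : ∀ i j, 0 ≤ x i j ∧ x i j ≤ π)
    (hsum : ∀ j, ∑ i, x i j = π)
    (d : ℝ) (hd : ∀ i, d ≤ ∏ j, Real.sin (x i j)) :
    d ≤ Real.sin (π / n) ^ m :=
  le_sin_pow_of_le_prod_sin_general n m hn x hrange hsum d hd
end
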